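/- For all v, w ∈ W, (h_v, ĥ_{w0 w})^H = δ_{v,w} (Kronecker delta), where w0 is the longest element of W. -/

import Mathlib

/-!
Since `∨` turns left multiplication by `ĥ_s` into right multiplication by `ĥ_s` (as one checks
on the basis `h_u`), induction on length gives `(ĥ_u)^∨ = ĥ_{u⁻¹}`, so `(h_v, ĥ_{w₀ w})^H` is the
`h_{w₀}`-coefficient of `h_v ĥ_{w⁻¹ w₀}`. Peeling simple reflections off `u`, the
`h_{w₀}`-coefficient of `h_v ĥ_u` is `[v u = w₀]`: right multiplication of `h_v` by `ĥ_s` gives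
`h_{vs} - (t1 + t2) h_v` or `-t1 t2 h_{vs}`, and the unwanted terms never reach `w₀` because
`ℓ x + ℓ y = ℓ w₀` whenever `x y = w₀`. That length identity comes from Tits' reflection cocycle,
which identifies the left inversions of `w` (there are `ℓ w` of them) and shows that every
reflection is a left inversion of `w₀`.
-/

open CoxeterSystem

/-- `g^∨ = ∑ c_w h_{w⁻¹}` for `g = ∑ c_w h_w`. -/
noncomputable def veeH {W : Type*} [Group W] [Fintype W] {K : Type*} [Field K]
    {H : Type*} [Ring H] [Algebra K H] (hb : Module.Basis W K H) (h : W → H) (g : H) : H :=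
  ∑ x : W, hb.repr g x • h x⁻¹

/-- The inner product `(f,g)^H`: the coefficient of `h_{w0}` in `f * g^∨`. -/
noncomputable def heckeInner {W : Type*} [Group W] [Fintype W] {K : Type*} [Field K]
    {H : Type*} [Ring H] [Algebra K H] (hb : Module.Basis W K H) (h : W → H) (w0 : W) (f g : H) : K :=
  hb.repr (f * veeH hb h g) w0

theorem SemidirectProduct.pow_right {N G : Type*} [Group N] [Group G] {φ : G →* MulAut N}
    (x : N ⋊[φ] G) (n : ℕ) : (x ^ n).right = x.right ^ n :=
  map_pow SemidirectProduct.rightHom x n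

theorem SemidirectProduct.pow_left {N G : Type*} [CommGroup N] [Group G] {φ : G →* MulAut N}
    (x : N ⋊[φ] G) (n : ℕ) : (x ^ n).left = ∏ k ∈ Finset.range n, φ (x.right ^ k) x.left := by
  induction n with
  | zero => rfl
  | succ n ih => rw [pow_succ, mul_left, ih, pow_right, Finset.prod_range_succ]

theorem Finset.prod_range_two_mul {M : Type*} [CommMonoid M] (f : ℕ → M) (n : ℕ) :
    ∏ k ∈ range (2 * n), f k = ∏ k ∈ range n, (f (2 * k) * f (2 * k + 1)) := by
  induction n with
  | zero => rfl
  | succ n ih =>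
    rw [Nat.mul_succ, prod_range_succ, prod_range_succ, prod_range_succ, ih, mul_assoc]

theorem pow_mul_pow_mul_mul_inv_of_mul_self {G : Type*} [Group G] {a b : G} (ha : a * a = 1)
    (hb : b * b = 1) (k l : ℕ) :
    (a * b) ^ k * ((a * b) ^ l * a) * ((a * b) ^ k)⁻¹ = (a * b) ^ (2 * k + l) * a := by
  have hconj : SemiconjBy a (a * b)⁻¹ (a * b) := by
    rw [SemiconjBy, mul_inv_rev, inv_eq_of_mul_eq_one_right ha, inv_eq_of_mul_eq_one_right hb,
      mul_assoc]
  rw [← inv_pow, mul_assoc, mul_assoc, (hconj.pow_right k).eq, ← mul_assoc, ← mul_assoc,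
    ← pow_add, ← pow_add, two_mul, Nat.add_right_comm]

theorem mul_sub_algebraMap_add_of_quadratic {K H : Type*} [CommRing K] [Ring H] [Algebra K H]
    {t1 t2 : K} {x : H} (hx : (x - algebraMap K H t1) * (x - algebraMap K H t2) = 0) :
    x * (x - algebraMap K H (t1 + t2)) = algebraMap K H (-(t1 * t2)) := by
  rw [← sub_eq_zero, ← hx, map_add, map_neg, map_mul]
  simp only [mul_sub, sub_mul, Algebra.commutes t1 x]
  noncomm_ring

namespace CoxeterSystem

def conjPrecomp (W N : Type*) [Group W] [Mul N] : W →* MulAut (W → N) where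
  toFun w :=
    { toFun := fun f t ↦ f (w⁻¹ * t * w)
      invFun := fun f t ↦ f (w * t * w⁻¹)
      left_inv := fun f ↦ by simp [mul_assoc]
      right_inv := fun f ↦ by simp [mul_assoc]
      map_mul' := fun _ _ ↦ rfl }
  map_one' := by ext; simp
  map_mul' := fun _ _ ↦ by ext; simp [mul_assoc]

theorem conjPrecomp_apply {W N : Type*} [Group W] [Mul N] (w : W) (f : W → N) (t : W) :
    conjPrecomp W N w f t = f (w⁻¹ * t * w) := rfl

theorem conjPrecomp_mulSingle {W N : Type*} [Group W] [DecidableEq W] [MulOneClass N]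
    (w t : W) (c : N) :
    conjPrecomp W N w (Pi.mulSingle t c) = Pi.mulSingle (w * t * w⁻¹) c := by
  funext x
  simp only [conjPrecomp_apply, Pi.mulSingle_apply]
  exact if_congr (by constructor <;> rintro rfl <;> group) rfl rfl

open Multiplicative

section ReflectionCocycle

variable {W : Type*} [Group W] [DecidableEq W]

local notation "N₂" => W → Multiplicative (ZMod 2)

/-- Each reflection `(a * b) ^ l * a`, `l < 2 * m`, of the dihedral group generated by the
involutions `a`, `b` occurs twice in the power, so the indicators cancel. -/
theorem mulSingle_mul_mulSingle_pow_eq_one {a b : W} (ha : a * a = 1) (hb : b * b = 1) {m : ℕ}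
    (hm : (a * b) ^ m = 1) :
    ((⟨Pi.mulSingle a (ofAdd 1), a⟩ : N₂ ⋊[conjPrecomp W _] W) *
      ⟨Pi.mulSingle b (ofAdd 1), b⟩) ^ m = 1 := by
  let δ (l : ℕ) : N₂ := Pi.mulSingle ((a * b) ^ l * a) (ofAdd 1)
  have hconj (k l : ℕ) : conjPrecomp W _ ((a * b) ^ k) (δ l) = δ (2 * k + l) := by
    simp only [δ, conjPrecomp_mulSingle, pow_mul_pow_mul_mul_inv_of_mul_self ha hb]
  have hleft : (⟨Pi.mulSingle a (ofAdd 1), a⟩ * ⟨Pi.mulSingle b (ofAdd 1), b⟩ :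
      N₂ ⋊[conjPrecomp W _] W).left = δ 0 * δ 1 := by
    simp [δ, conjPrecomp_mulSingle, inv_eq_of_mul_eq_one_right ha]
  ext1
  · rw [SemidirectProduct.pow_left, hleft]
    simp only [SemidirectProduct.mul_right, map_mul, hconj, add_zero]
    rw [← Finset.prod_range_two_mul, two_mul, Finset.prod_range_add]
    simp only [δ, pow_add, hm, one_mul]
    exact funext fun t ↦ congrArg ofAdd (CharTwo.add_self_eq_zero (toAdd _))
  · rw [SemidirectProduct.pow_right]
    exact hm

variable {B : Type*} {M : CoxeterMatrix B} (cs : CoxeterSystem M W)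

theorem isLiftable_mulSingle_simple :
    M.IsLiftable fun i ↦ (⟨Pi.mulSingle (cs.simple i) (ofAdd 1), cs.simple i⟩ :
      N₂ ⋊[conjPrecomp W _] W) := fun i j ↦
  mulSingle_mul_mulSingle_pow_eq_one (cs.simple_mul_simple_self i)
    (cs.simple_mul_simple_self j) (cs.simple_mul_simple_pow i j)

noncomputable def reflectionLift : W →* N₂ ⋊[conjPrecomp W _] W :=
  cs.lift ⟨_, cs.isLiftable_mulSingle_simple⟩

theorem reflectionLift_simple (i : B) :
    cs.reflectionLift (cs.simple i) = ⟨Pi.mulSingle (cs.simple i) (ofAdd 1), cs.simple i⟩ :=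
  cs.lift_apply_simple cs.isLiftable_mulSingle_simple i

theorem reflectionLift_right (w : W) : (cs.reflectionLift w).right = w := by
  have : SemidirectProduct.rightHom.comp cs.reflectionLift = MonoidHom.id W :=
    cs.ext_simple fun i ↦ by simp [reflectionLift_simple]
  exact DFunLike.congr_fun this w

noncomputable def reflectionCocycle (w t : W) : ZMod 2 :=
  toAdd ((cs.reflectionLift w).left t)

theorem reflectionCocycle_one (t : W) : cs.reflectionCocycle 1 t = 0 := by
  simp [reflectionCocycle]

theorem reflectionCocycle_mul (u v t : W) :
    cs.reflectionCocycle (u * v) t =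
      cs.reflectionCocycle u t + cs.reflectionCocycle v (u⁻¹ * t * u) := by
  simp [reflectionCocycle, reflectionLift_right, conjPrecomp_apply]

theorem reflectionCocycle_simple (i : B) (t : W) :
    cs.reflectionCocycle (cs.simple i) t = if t = cs.simple i then 1 else 0 := by
  simp [reflectionCocycle, reflectionLift_simple, Pi.mulSingle_apply, apply_ite toAdd]

theorem reflectionCocycle_wordProd (ω : List B) (t : W) :
    cs.reflectionCocycle (cs.wordProd ω) t = (cs.leftInvSeq ω).count t := by
  induction ω generalizing t with
  | nil => simp [reflectionCocycle_one]
  | cons i ω ih =>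
    have hconj : t = MulAut.conj (cs.simple i) (cs.simple i * t * cs.simple i) := by
      simp [mul_assoc]
    rw [wordProd_cons, reflectionCocycle_mul, reflectionCocycle_simple, ih, leftInvSeq,
      List.count_cons, hconj, List.count_map_of_injective _ _ (MulAut.conj _).injective, ← hconj,
      cs.inv_simple, add_comm, Nat.cast_add]
    by_cases ht : t = cs.simple i <;> simp [ht, Ne.symm]

theorem reflectionCocycle_eq_one_iff_mem_leftInvSeq {ω : List B} (hω : cs.IsReduced ω) (t : W) :
    cs.reflectionCocycle (cs.wordProd ω) t = 1 ↔ t ∈ cs.leftInvSeq ω := by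
  rw [reflectionCocycle_wordProd]
  by_cases ht : t ∈ cs.leftInvSeq ω
  · simp [ht, List.count_eq_one_of_mem hω.nodup_leftInvSeq ht]
  · simp [ht, List.count_eq_zero_of_not_mem ht]

theorem reflectionCocycle_self_of_isReflection {t : W} (ht : cs.IsReflection t) :
    cs.reflectionCocycle t t = 1 := by
  obtain ⟨u, i, rfl⟩ := ht
  suffices ∀ t, u⁻¹ * t * u = cs.simple i → cs.reflectionCocycle (u * cs.simple i * u⁻¹) t = 1
    from this _ (by group)
  intro t hback
  have hcancel := cs.reflectionCocycle_mul u u⁻¹ t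
  rw [mul_inv_cancel, reflectionCocycle_one, hback] at hcancel
  rw [mul_assoc, reflectionCocycle_mul, reflectionCocycle_mul, hback, cs.inv_simple,
    cs.simple_mul_simple_cancel_right, reflectionCocycle_simple, if_pos rfl]
  linear_combination -hcancel

theorem reflectionCocycle_eq_one_iff_isLeftInversion (w t : W) :
    cs.reflectionCocycle w t = 1 ↔ cs.IsLeftInversion w t := by
  have hmp (w : W) : cs.reflectionCocycle w t = 1 → cs.IsLeftInversion w t := by
    obtain ⟨ω, hω, rfl⟩ := cs.exists_isReduced w
    rw [reflectionCocycle_eq_one_iff_mem_leftInvSeq cs hω]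
    exact cs.isLeftInversion_of_mem_leftInvSeq hω
  refine ⟨hmp w, fun hinv ↦ ?_⟩
  by_contra hne
  have hzero : cs.reflectionCocycle w t = 0 := by
    generalize cs.reflectionCocycle w t = z at hne; revert z; decide
  have hlt := (hmp (t * w) (by
    rw [reflectionCocycle_mul, reflectionCocycle_self_of_isReflection cs hinv.1, inv_mul_cancel,
      one_mul, hzero, add_zero])).2
  rw [← mul_assoc, hinv.1.mul_self, one_mul] at hlt
  exact lt_asymm hinv.2 hlt

theorem encard_setOf_isLeftInversion (w : W) :
    {t | cs.IsLeftInversion w t}.encard = cs.length w := by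
  obtain ⟨ω, hω, rfl⟩ := cs.exists_isReduced w
  have hset : {t | cs.IsLeftInversion (cs.wordProd ω) t} = ↑(cs.leftInvSeq ω).toFinset := by
    ext t
    simp [← reflectionCocycle_eq_one_iff_isLeftInversion,
      reflectionCocycle_eq_one_iff_mem_leftInvSeq cs hω]
  rw [hset, Set.encard_coe_eq_coe_finsetCard, List.toFinset_card_of_nodup hω.nodup_leftInvSeq,
    length_leftInvSeq, hω.eq]

end ReflectionCocycle

section LongestElement

variable {B W : Type*} [Group W] {M : CoxeterMatrix B} (cs : CoxeterSystem M W) {w₀ : W}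

theorem isLeftInversion_of_forall_length_le (hw₀ : ∀ u, cs.length u ≤ cs.length w₀) {t : W}
    (ht : cs.IsReflection t) : cs.IsLeftInversion w₀ t :=
  ⟨ht, lt_of_le_of_ne (hw₀ _) (ht.length_mul_right_ne w₀)⟩

/-- The inversions of `x` and the `x`-conjugates of the inversions of `y` are disjoint by the
cocycle identity, and all of them are inversions of `w₀`. -/
theorem length_add_length_of_mul_eq (hw₀ : ∀ u, cs.length u ≤ cs.length w₀) {x y : W}
    (hxy : x * y = w₀) : cs.length x + cs.length y = cs.length w₀ := by
  classical
  refine le_antisymm ?_ (hxy ▸ cs.length_mul_le x y)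
  have hcocycle_one {w t : W} : cs.IsLeftInversion w t → cs.reflectionCocycle w t = 1 :=
    (cs.reflectionCocycle_eq_one_iff_isLeftInversion w t).mpr
  set Ix := {t | cs.IsLeftInversion x t}
  set Iy := (fun t ↦ x * t * x⁻¹) '' {t | cs.IsLeftInversion y t}
  have hdisj : Disjoint Ix Iy := by
    rw [Set.disjoint_left]
    rintro _ htx ⟨t, hty, rfl⟩
    have hw₀t := hcocycle_one (cs.isLeftInversion_of_forall_length_le hw₀ htx.1)
    rw [← hxy, reflectionCocycle_mul, hcocycle_one htx, show x⁻¹ * (x * t * x⁻¹) * x = t by group,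
      hcocycle_one hty] at hw₀t
    exact absurd hw₀t (by decide)
  have hsub : Ix ∪ Iy ⊆ {t | cs.IsLeftInversion w₀ t} := by
    rintro _ (htx | ⟨t, hty, rfl⟩)
    · exact cs.isLeftInversion_of_forall_length_le hw₀ htx.1
    · exact cs.isLeftInversion_of_forall_length_le hw₀ (hty.1.conj x)
  have hinj : Function.Injective fun t ↦ x * t * x⁻¹ := fun a b hab ↦ by simpa using hab
  have := Set.encard_le_encard hsub
  rw [Set.encard_union_eq hdisj, hinj.encard_image, encard_setOf_isLeftInversion,
    encard_setOf_isLeftInversion, encard_setOf_isLeftInversion] at this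
  exact_mod_cast this

theorem inv_eq_of_forall_length_le (hw₀ : ∀ u, cs.length u ≤ cs.length w₀) : w₀⁻¹ = w₀ := by
  have := cs.length_add_length_of_mul_eq hw₀ (x := w₀⁻¹) (y := w₀ * w₀) (by group)
  rw [length_inv] at this
  exact inv_eq_of_mul_eq_one_right (cs.length_eq_zero_iff.mp (by omega))

end LongestElement

section ReducedProducts

variable {B W : Type*} [Group W] {M : CoxeterMatrix B} (cs : CoxeterSystem M W)

theorem reduced_induction_left {p : W → Prop} (one : p 1)
    (simple_mul : ∀ w i, ¬cs.IsLeftDescent w i → p w → p (cs.simple i * w)) (w : W) : p w := by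
  induction hn : cs.length w using Nat.strong_induction_on generalizing w with
  | _ n ih =>
    obtain rfl | hw := eq_or_ne w 1
    · exact one
    obtain ⟨i, hi⟩ := cs.exists_leftDescent_of_ne_one hw
    rw [← cs.simple_mul_simple_cancel_left (w := w) i]
    exact simple_mul _ i (cs.isLeftDescent_iff_not_isLeftDescent_mul.mp hi) (ih _ (hn ▸ hi) _ rfl)

structure IsReducedMultiplicative {H : Type*} [MulOneClass H] (f : W → H) : Prop where
  map_one : f 1 = 1
  map_mul : ∀ u v, cs.length (u * v) = cs.length u + cs.length v → f (u * v) = f u * f v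

variable {cs} {H : Type*} [MulOneClass H] {f : W → H} {w : W} {i : B}

theorem IsReducedMultiplicative.map_simple_mul (hf : cs.IsReducedMultiplicative f)
    (hw : ¬cs.IsLeftDescent w i) : f (cs.simple i * w) = f (cs.simple i) * f w :=
  hf.map_mul _ _ (by rw [length_simple, cs.not_isLeftDescent_iff.mp hw, add_comm])

theorem IsReducedMultiplicative.map_mul_simple (hf : cs.IsReducedMultiplicative f)
    (hw : ¬cs.IsRightDescent w i) : f (w * cs.simple i) = f w * f (cs.simple i) :=
  hf.map_mul _ _ (by rw [length_simple, cs.not_isRightDescent_iff.mp hw])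

end ReducedProducts

section HeckeAlgebra

variable {B W K H : Type*} [Group W] {M : CoxeterMatrix B} {cs : CoxeterSystem M W}
  [CommRing K] [Ring H] [Algebra K H] {t1 t2 : K} {h : W → H} {u : W} {i : B}

theorem mul_h_simple_sub_of_not_isRightDescent (hh : cs.IsReducedMultiplicative h)
    (hu : ¬cs.IsRightDescent u i) :
    h u * (h (cs.simple i) - algebraMap K H (t1 + t2)) =
      h (u * cs.simple i) - (t1 + t2) • h u := by
  rw [mul_sub, ← hh.map_mul_simple hu, ← Algebra.commutes, ← Algebra.smul_def]

theorem mul_h_simple_sub_of_isRightDescent (hh : cs.IsReducedMultiplicative h)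
    (hquad : (h (cs.simple i) - algebraMap K H t1) * (h (cs.simple i) - algebraMap K H t2) = 0)
    (hu : cs.IsRightDescent u i) :
    h u * (h (cs.simple i) - algebraMap K H (t1 + t2)) = -(t1 * t2) • h (u * cs.simple i) := by
  conv_lhs => rw [← cs.simple_mul_simple_cancel_right (w := u) i,
    hh.map_mul_simple (cs.isRightDescent_iff_not_isRightDescent_mul.mp hu)]
  rw [mul_assoc, mul_sub_algebraMap_add_of_quadratic hquad, ← Algebra.commutes,
    ← Algebra.smul_def]

theorem h_simple_sub_mul_of_not_isLeftDescent (hh : cs.IsReducedMultiplicative h)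
    (hu : ¬cs.IsLeftDescent u i) :
    (h (cs.simple i) - algebraMap K H (t1 + t2)) * h u =
      h (cs.simple i * u) - (t1 + t2) • h u := by
  rw [sub_mul, ← hh.map_simple_mul hu, ← Algebra.smul_def]

theorem h_simple_sub_mul_of_isLeftDescent (hh : cs.IsReducedMultiplicative h)
    (hquad : (h (cs.simple i) - algebraMap K H t1) * (h (cs.simple i) - algebraMap K H t2) = 0)
    (hu : cs.IsLeftDescent u i) :
    (h (cs.simple i) - algebraMap K H (t1 + t2)) * h u = -(t1 * t2) • h (cs.simple i * u) := by
  conv_lhs => rw [← cs.simple_mul_simple_cancel_left (w := u) i,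
    hh.map_simple_mul (cs.isLeftDescent_iff_not_isLeftDescent_mul.mp hu)]
  rw [← mul_assoc, ((Commute.refl _).sub_left (Algebra.commute_algebraMap_left _ _)).eq,
    mul_sub_algebraMap_add_of_quadratic hquad, ← Algebra.smul_def]

theorem repr_h_mul_hhat_of_forall_length_le [DecidableEq W] (hb : Module.Basis W K H)
    {hhat : W → H} (hh : cs.IsReducedMultiplicative h)
    (hquad : ∀ i, (h (cs.simple i) - algebraMap K H t1) * (h (cs.simple i) - algebraMap K H t2) = 0)
    (hhat' : cs.IsReducedMultiplicative hhat)
    (hhat_simple : ∀ i, hhat (cs.simple i) = h (cs.simple i) - algebraMap K H (t1 + t2))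
    (hbasis : ∀ w, hb w = h w) {w₀ : W} (hw₀ : ∀ u, cs.length u ≤ cs.length w₀) (v u : W) :
    hb.repr (h v * hhat u) w₀ = if v * u = w₀ then 1 else 0 := by
  induction u using cs.reduced_induction_left generalizing v with
  | one => rw [hhat'.map_one, mul_one, mul_one, ← hbasis, hb.repr_self, Finsupp.single_apply]
  | simple_mul w i hw ih =>
    have hsw := cs.not_isLeftDescent_iff.mp hw
    rw [hhat'.map_simple_mul hw, ← mul_assoc, hhat_simple]
    by_cases hv : cs.IsRightDescent v i
    · have hne : v * (cs.simple i * w) ≠ w₀ := fun heq ↦ by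
        have h1 := cs.length_add_length_of_mul_eq hw₀ heq
        have h2 := cs.length_add_length_of_mul_eq hw₀ (x := v * cs.simple i) (y := w)
          (by rw [mul_assoc, heq])
        have := cs.isRightDescent_iff.mp hv
        omega
      rw [mul_h_simple_sub_of_isRightDescent hh (hquad i) hv, smul_mul_assoc, map_smul,
        Finsupp.smul_apply, ih, mul_assoc]
      simp [hne]
    · have hne : v * w ≠ w₀ := fun heq ↦ by
        have h1 := cs.length_add_length_of_mul_eq hw₀ heq
        have h2 := cs.length_add_length_of_mul_eq hw₀ (x := v * cs.simple i)
          (y := cs.simple i * w) (by rw [mul_assoc, cs.simple_mul_simple_cancel_left, heq])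
        have := cs.not_isRightDescent_iff.mp hv
        omega
      rw [mul_h_simple_sub_of_not_isRightDescent hh hv, sub_mul, smul_mul_assoc, map_sub,
        map_smul, Finsupp.sub_apply, Finsupp.smul_apply, ih, ih, mul_assoc]
      simp [hne]

end HeckeAlgebra

end CoxeterSystem

section Vee

variable {B W K H : Type*} [Group W] [Fintype W] {M : CoxeterMatrix B} {cs : CoxeterSystem M W}
  [Field K] [Ring H] [Algebra K H] (hb : Module.Basis W K H) {h hhat : W → H} {t1 t2 : K}
  {i : B}

theorem veeH_eq_constr : veeH hb h = hb.constr K fun x ↦ h x⁻¹ := by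
  ext g
  simp [veeH, Module.Basis.equivFun_apply]

theorem veeH_h (hbasis : ∀ w, hb w = h w) (u : W) : veeH hb h (h u) = h u⁻¹ := by
  rw [veeH_eq_constr, ← hbasis, hb.constr_basis]

theorem veeH_h_simple_sub_mul (hh : cs.IsReducedMultiplicative h)
    (hquad : (h (cs.simple i) - algebraMap K H t1) * (h (cs.simple i) - algebraMap K H t2) = 0)
    (hbasis : ∀ w, hb w = h w) (x : H) :
    veeH hb h ((h (cs.simple i) - algebraMap K H (t1 + t2)) * x) =
      veeH hb h x * (h (cs.simple i) - algebraMap K H (t1 + t2)) := by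
  set V := hb.constr K fun x ↦ h x⁻¹
  have hV (u : W) : V (h u) = h u⁻¹ := by rw [← veeH_h hb hbasis, veeH_eq_constr]
  have hsimple_inv (u : W) : (cs.simple i * u)⁻¹ = u⁻¹ * cs.simple i := by
    rw [mul_inv_rev, inv_simple]
  suffices V ∘ₗ LinearMap.mulLeft K (h (cs.simple i) - algebraMap K H (t1 + t2)) =
      LinearMap.mulRight K (h (cs.simple i) - algebraMap K H (t1 + t2)) ∘ₗ V by
    rw [veeH_eq_constr]
    exact LinearMap.congr_fun this x
  refine hb.ext fun u ↦ ?_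
  simp only [LinearMap.comp_apply, LinearMap.mulLeft_apply, LinearMap.mulRight_apply, hbasis, hV]
  by_cases hu : cs.IsLeftDescent u i
  · rw [h_simple_sub_mul_of_isLeftDescent hh hquad hu,
      mul_h_simple_sub_of_isRightDescent hh hquad (cs.isRightDescent_inv_iff.mpr hu), map_smul,
      hV, hsimple_inv]
  · rw [h_simple_sub_mul_of_not_isLeftDescent hh hu,
      mul_h_simple_sub_of_not_isRightDescent hh (cs.isRightDescent_inv_iff.not.mpr hu), map_sub,
      map_smul, hV, hV, hsimple_inv]

theorem veeH_hhat (hh : cs.IsReducedMultiplicative h)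
    (hquad : ∀ i, (h (cs.simple i) - algebraMap K H t1) * (h (cs.simple i) - algebraMap K H t2) = 0)
    (hhat' : cs.IsReducedMultiplicative hhat)
    (hhat_simple : ∀ i, hhat (cs.simple i) = h (cs.simple i) - algebraMap K H (t1 + t2))
    (hbasis : ∀ w, hb w = h w) (u : W) : veeH hb h (hhat u) = hhat u⁻¹ := by
  induction u using cs.reduced_induction_left with
  | one => rw [hhat'.map_one, inv_one, hhat'.map_one, ← hh.map_one, veeH_h hb hbasis, inv_one]
  | simple_mul w i hw ih =>
    rw [hhat'.map_simple_mul hw, hhat_simple, veeH_h_simple_sub_mul hb hh (hquad i) hbasis, ih,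
      ← hhat_simple, ← hhat'.map_mul_simple (cs.isRightDescent_inv_iff.not.mpr hw), mul_inv_rev,
      inv_simple]

end Vee

theorem heckeInner_h_hhat_orthogonality_general
    {r : ℕ} {W : Type*} [Group W] [Fintype W] [DecidableEq W] {M : CoxeterMatrix (Fin r)}
    (cs : CoxeterSystem M W)
    {K : Type*} [Field K]
    (t1 t2 : K)
    {H : Type*} [Ring H] [Algebra K H]
    (h : W → H) (hb : Module.Basis W K H)
    (hbasis : ∀ w : W, hb w = h w)
    (hone : h 1 = 1)
    (hmul : ∀ u v : W, cs.length (u * v) = cs.length u + cs.length v →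
      h (u * v) = h u * h v)
    (hquad : ∀ i : Fin r,
      (h (cs.simple i) - algebraMap K H t1) * (h (cs.simple i) - algebraMap K H t2) = 0)
    (w0 : W) (hw0 : ∀ u : W, cs.length u ≤ cs.length w0)
    (hhat : W → H) (hhat_one : hhat 1 = 1)
    (hhat_mul : ∀ u v : W, cs.length (u * v) = cs.length u + cs.length v →
      hhat (u * v) = hhat u * hhat v)
    (hhat_simple : ∀ i : Fin r,
      hhat (cs.simple i) = h (cs.simple i) - algebraMap K H (t1 + t2))
    (v w : W) :
    heckeInner hb h w0 (h v) (hhat (w0 * w)) = if v = w then 1 else 0 := by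
  have hh : cs.IsReducedMultiplicative h := ⟨hone, hmul⟩
  have hhat' : cs.IsReducedMultiplicative hhat := ⟨hhat_one, hhat_mul⟩
  rw [heckeInner, veeH_hhat hb hh hquad hhat' hhat_simple hbasis,
    cs.repr_h_mul_hhat_of_forall_length_le hb hh hquad hhat' hhat_simple hbasis hw0]
  refine if_congr ?_ rfl rfl
  rw [mul_inv_rev, cs.inv_eq_of_forall_length_le hw0, ← mul_assoc, mul_eq_right, mul_inv_eq_one]

/-- orthogonality `(h_v, ĥ_{w0 w})^H = δ_{v,w}`, where `ĥ` is the involution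
determined by `ĥ_i = h_i - (t1+t2)`, `t̂1 = -t2`, `t̂2 = -t1` (so that `ĥ_u` for `u ∈ W` is
the corresponding product of the `ĥ_i` along a reduced word for `u`). -/
theorem heckeInner_h_hhat_orthogonality
    {r : ℕ} {W : Type*} [Group W] [Fintype W] [DecidableEq W] {M : CoxeterMatrix (Fin r)}
    (cs : CoxeterSystem M W)
    {Λ : Type*} [AddCommGroup Λ] (wΛ : W →* Multiplicative (AddAut Λ)) (α : Fin r → Λ)
    (coroot : Fin r → (Λ →+ ℤ))
    (hact : ∀ (i : Fin r) (lam : Λ), Multiplicative.toAdd (wΛ (cs.simple i)) lam = lam - (coroot i lam) • α i)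
    (hαα : ∀ i : Fin r, coroot i (α i) = 2)
    (hindep : LinearIndependent ℤ α)
    (hcart : ∀ i j : Fin r, i ≠ j →
      (M.M i j = 2 ∧ coroot i (α j) = 0 ∧ coroot j (α i) = 0) ∨
      (M.M i j = 3 ∧ coroot i (α j) = -1 ∧ coroot j (α i) = -1) ∨
      (M.M i j = 4 ∧ coroot i (α j) * coroot j (α i) = 2 ∧
        coroot i (α j) < 0 ∧ coroot j (α i) < 0) ∨
      (M.M i j = 6 ∧ coroot i (α j) * coroot j (α i) = 3 ∧
        coroot i (α j) < 0 ∧ coroot j (α i) < 0))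
    {K : Type*} [Field K] (exp : Multiplicative Λ →* Kˣ)
    (hexp_inj : Function.Injective exp)
    (t1 t2 : K) (wK : W →* RingAut K)
    (hwexp : ∀ (w : W) (lam : Λ),
      wK w ((exp (Multiplicative.ofAdd lam) : Kˣ) : K)
        = ((exp (Multiplicative.ofAdd (Multiplicative.toAdd (wΛ w) lam)) : Kˣ) : K))
    (hwt1 : ∀ w : W, wK w t1 = t1) (hwt2 : ∀ w : W, wK w t2 = t2)
    {H : Type*} [Ring H] [Algebra K H]
    (h : W → H) (hb : Module.Basis W K H)
    (hbasis : ∀ w : W, hb w = h w)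
    (hone : h 1 = 1)
    (hmul : ∀ u v : W, cs.length (u * v) = cs.length u + cs.length v →
      h (u * v) = h u * h v)
    (hquad : ∀ i : Fin r,
      (h (cs.simple i) - algebraMap K H t1) * (h (cs.simple i) - algebraMap K H t2) = 0)
    (w0 : W) (hw0 : ∀ u : W, cs.length u ≤ cs.length w0)
    (hhat : W → H) (hhat_one : hhat 1 = 1)
    (hhat_mul : ∀ u v : W, cs.length (u * v) = cs.length u + cs.length v →
      hhat (u * v) = hhat u * hhat v)
    (hhat_simple : ∀ i : Fin r,
      hhat (cs.simple i) = h (cs.simple i) - algebraMap K H (t1 + t2))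
    (v w : W) :
    heckeInner hb h w0 (h v) (hhat (w0 * w)) = if v = w then 1 else 0 :=
  heckeInner_h_hhat_orthogonality_general cs t1 t2 h hb hbasis hone hmul hquad w0 hw0 hhat hhat_one
    hhat_mul hhat_simple v w
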